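/- arXiv:2507.12729 — 4 statements merged into one kernel-verified Lean document; each statement's English description precedes it below -/
import Mathlib

section
/- Fix n₃ ≥ 1 and an orthogonal matrix M ∈ ℝ^{n₃×n₃} (MᵀM = I). Let A be a ⋆_M-symmetric tensor of size n × n × n₃ and let Â = A ×₃ M. Then A is ⋆_M-positive semidefinite if and only if for every k ∈ {1,…,n₃} the k-th frontal slice of Â is a positive semidefinite n × n matrix. -/
open Matrix BigOperators Kronecker

noncomputable section

/-- The tubal `⋆_M`-product of tubes `a, b : Fin n₃ → R`:
`a ⋆_M b = M⁻¹ *ᵥ ((M *ᵥ a) ⊙ (M *ᵥ b))`, where `⊙` is the entrywise product. -/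
def tubMul {n₃ : ℕ} {R : Type} [CommRing R] (M : Matrix (Fin n₃) (Fin n₃) R)
    (a b : Fin n₃ → R) : Fin n₃ → R :=
  M⁻¹ *ᵥ ((M *ᵥ a) * (M *ᵥ b))

/-- The tensor `⋆_M`-product of an `ι × κ × n₃` tensor with a `κ × μ × n₃` tensor. -/
def tenMul {n₃ : ℕ} {R : Type} [CommRing R] {ι κ μ : Type} [Fintype κ]
    (M : Matrix (Fin n₃) (Fin n₃) R)
    (A : ι → κ → (Fin n₃ → R)) (B : κ → μ → (Fin n₃ → R)) : ι → μ → (Fin n₃ → R) :=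
  fun i j => ∑ ℓ, tubMul M (A i ℓ) (B ℓ j)

/-- The `⋆_M`-transpose of a tensor. -/
def tenTrans {ι κ γ : Type} (A : ι → κ → γ) : κ → ι → γ := fun i j => A j i

/-- The inner product of two same-size third order tensors. -/
def tenInner {n₃ : ℕ} {ι κ : Type} [Fintype ι] [Fintype κ]
    (A B : ι → κ → (Fin n₃ → ℝ)) : ℝ :=
  ∑ i, ∑ j, ∑ k, A i j k * B i j k

/-- A square tensor is `⋆_M`-positive semidefinite if it is `⋆_M`-symmetric and
`⟨X, A ⋆_M X⟩ ≥ 0` for all `X` of size `n × 1 × n₃`. -/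
def tenPSD {n₃ : ℕ} {ι : Type} [Fintype ι] (M : Matrix (Fin n₃) (Fin n₃) ℝ)
    (A : ι → ι → (Fin n₃ → ℝ)) : Prop :=
  tenTrans A = A ∧ ∀ X : ι → Fin 1 → (Fin n₃ → ℝ), 0 ≤ tenInner X (tenMul M A X)

/-- The multiplicative identity tube `e_M = M⁻¹ 𝟙`. -/
def tubOne {n₃ : ℕ} (M : Matrix (Fin n₃) (Fin n₃) ℝ) : Fin n₃ → ℝ :=
  M⁻¹ *ᵥ (fun _ => 1)

/-- The `⋆_M`-identity tensor. -/
def tenId {n₃ : ℕ} {ι : Type} [DecidableEq ι] (M : Matrix (Fin n₃) (Fin n₃) ℝ) :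
    ι → ι → (Fin n₃ → ℝ) :=
  fun i j => if i = j then tubOne M else 0

/-- The block matricization `mat_M(A)`: the `(i,j)` block is `diag(M *ᵥ A i j)`. -/
def tenMat {n₃ : ℕ} {ι κ : Type} (M : Matrix (Fin n₃) (Fin n₃) ℝ)
    (A : ι → κ → (Fin n₃ → ℝ)) : Matrix (ι × Fin n₃) (κ × Fin n₃) ℝ :=
  Matrix.of fun p q => if p.2 = q.2 then (M *ᵥ A p.1 q.1) p.2 else 0

/-! For orthogonal `M` we have `M⁻¹ = Mᵀ`, so the transform passes through the inner product:
`⟨X, A ⋆_M X⟩ = ∑ₖ x̂ₖᵀ Âₖ x̂ₖ`, where `x̂ₖ` is the `k`-th frontal slice of `X ×₃ M`. Hence PSD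
slices give a PSD tensor; conversely, taking `X = Y ×₃ Mᵀ` with `Y` supported on the `k`-th
frontal slice isolates the quadratic form of `Âₖ`. -/

/-- `A ×₃ M`. -/
def modeProduct {n₃ : ℕ} {ι κ : Type} (M : Matrix (Fin n₃) (Fin n₃) ℝ)
    (A : ι → κ → (Fin n₃ → ℝ)) : ι → κ → (Fin n₃ → ℝ) :=
  fun i j => M *ᵥ A i j

def frontalSlice {n₃ : ℕ} {ι κ : Type} (A : ι → κ → (Fin n₃ → ℝ)) (k : Fin n₃) :
    Matrix ι κ ℝ :=
  Matrix.of fun i j => A i j k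

section

variable {n₃ : ℕ} {ι κ μ : Type}

theorem modeProduct_modeProduct (M N : Matrix (Fin n₃) (Fin n₃) ℝ)
    (A : ι → κ → (Fin n₃ → ℝ)) :
    modeProduct M (modeProduct N A) = modeProduct (M * N) A := by
  funext i j
  exact mulVec_mulVec _ _ _

theorem modeProduct_one (A : ι → κ → (Fin n₃ → ℝ)) : modeProduct 1 A = A := by
  funext i j
  exact one_mulVec _

theorem isHermitian_frontalSlice_modeProduct (M : Matrix (Fin n₃) (Fin n₃) ℝ)
    {A : ι → ι → (Fin n₃ → ℝ)} (hA : tenTrans A = A) (k : Fin n₃) :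
    (frontalSlice (modeProduct M A) k).IsHermitian := by
  rw [isHermitian_iff_isSymm]
  ext i j
  simp only [transpose_apply, frontalSlice, modeProduct, of_apply, ← congrFun₂ hA i j,
    tenTrans]

theorem dotProduct_tubMul_of_orthogonal {M : Matrix (Fin n₃) (Fin n₃) ℝ} (hM : Mᵀ * M = 1)
    (x a b : Fin n₃ → ℝ) :
    x ⬝ᵥ tubMul M a b = (M *ᵥ x) ⬝ᵥ ((M *ᵥ a) * (M *ᵥ b)) := by
  rw [tubMul, inv_eq_left_inv hM, dotProduct_mulVec, vecMul_transpose]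

variable [Fintype ι] [Fintype κ] [Fintype μ]

theorem tenInner_eq_sum_dotProduct (X Y : ι → κ → (Fin n₃ → ℝ)) :
    tenInner X Y = ∑ i, ∑ j, X i j ⬝ᵥ Y i j :=
  rfl

theorem sum_dotProduct_mul_eq_sum_frontalSlice (X : ι → μ → (Fin n₃ → ℝ))
    (A : ι → κ → (Fin n₃ → ℝ)) (Y : κ → μ → (Fin n₃ → ℝ)) :
    ∑ i, ∑ j, ∑ ℓ, X i j ⬝ᵥ (A i ℓ * Y ℓ j) =
      ∑ k, ∑ j, (fun i => X i j k) ⬝ᵥ (frontalSlice A k *ᵥ fun ℓ => Y ℓ j k) := by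
  simp only [dotProduct, mulVec, frontalSlice, of_apply, Pi.mul_apply, Finset.mul_sum]
  calc ∑ i, ∑ j, ∑ ℓ, ∑ k, X i j k * (A i ℓ k * Y ℓ j k)
      = ∑ i, ∑ j, ∑ k, ∑ ℓ, X i j k * (A i ℓ k * Y ℓ j k) := by
        simp only [Finset.sum_comm (γ := κ)]
    _ = ∑ i, ∑ k, ∑ j, ∑ ℓ, X i j k * (A i ℓ k * Y ℓ j k) :=
        Finset.sum_congr rfl fun _ _ => Finset.sum_comm
    _ = ∑ k, ∑ i, ∑ j, ∑ ℓ, X i j k * (A i ℓ k * Y ℓ j k) := Finset.sum_comm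
    _ = ∑ k, ∑ j, ∑ i, ∑ ℓ, X i j k * (A i ℓ k * Y ℓ j k) :=
        Finset.sum_congr rfl fun _ _ => Finset.sum_comm

theorem tenInner_tenMul_of_orthogonal {M : Matrix (Fin n₃) (Fin n₃) ℝ} (hM : Mᵀ * M = 1)
    (X : ι → μ → (Fin n₃ → ℝ)) (A : ι → κ → (Fin n₃ → ℝ)) (Y : κ → μ → (Fin n₃ → ℝ)) :
    tenInner X (tenMul M A Y) =
      ∑ k, ∑ j, (fun i => modeProduct M X i j k) ⬝ᵥ
        (frontalSlice (modeProduct M A) k *ᵥ fun ℓ => modeProduct M Y ℓ j k) := by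
  simp only [tenInner_eq_sum_dotProduct, tenMul, dotProduct_sum,
    dotProduct_tubMul_of_orthogonal hM]
  exact sum_dotProduct_mul_eq_sum_frontalSlice _ _ _

theorem tenInner_tenMul_single_of_orthogonal {M : Matrix (Fin n₃) (Fin n₃) ℝ}
    (hM : Mᵀ * M = 1) (A : ι → ι → (Fin n₃ → ℝ)) (k : Fin n₃) (v : ι → ℝ) :
    let X : ι → Fin 1 → (Fin n₃ → ℝ) := modeProduct Mᵀ fun i _ => Pi.single k (v i)
    tenInner X (tenMul M A X) = v ⬝ᵥ (frontalSlice (modeProduct M A) k *ᵥ v) := by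
  intro X
  rw [tenInner_tenMul_of_orthogonal hM, modeProduct_modeProduct, mul_eq_one_comm.mp hM,
    modeProduct_one, Fintype.sum_eq_single k]
  · simp only [Fin.sum_univ_one, Pi.single_eq_same]
  · intro k' hk'
    simp only [Pi.single_eq_of_ne hk', ← Pi.zero_def, zero_dotProduct, Finset.sum_const_zero]

end

theorem tenPSD_iff_transform_slices_posSemidef_general (n₃ n : ℕ)
    (M : Matrix (Fin n₃) (Fin n₃) ℝ) (hM : Mᵀ * M = 1)
    (A : Fin n → Fin n → (Fin n₃ → ℝ)) (hA : tenTrans A = A) :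
    tenPSD M A ↔
      ∀ k : Fin n₃, (Matrix.of fun i j : Fin n => (M *ᵥ A i j) k).PosSemidef := by
  change _ ↔ ∀ k, (frontalSlice (modeProduct M A) k).PosSemidef
  constructor
  · rintro ⟨-, hnonneg⟩ k
    refine .of_dotProduct_mulVec_nonneg (isHermitian_frontalSlice_modeProduct M hA k) fun v => ?_
    rw [star_trivial, ← tenInner_tenMul_single_of_orthogonal hM]
    exact hnonneg _
  · intro hslices
    refine ⟨hA, fun X => ?_⟩
    rw [tenInner_tenMul_of_orthogonal hM]
    exact Finset.sum_nonneg fun k _ => Finset.sum_nonneg fun j _ =>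
      (hslices k).dotProduct_mulVec_nonneg _

/-- A `⋆_M`-symmetric tensor `A` is `⋆_M`-PSD iff every frontal slice of
`Â = A ×₃ M` is a positive semidefinite matrix. -/
theorem tenPSD_iff_transform_slices_posSemidef (n₃ n : ℕ) (hn₃ : 1 ≤ n₃)
    (M : Matrix (Fin n₃) (Fin n₃) ℝ) (hM : Mᵀ * M = 1)
    (A : Fin n → Fin n → (Fin n₃ → ℝ)) (hA : tenTrans A = A) :
    tenPSD M A ↔
      ∀ k : Fin n₃, (Matrix.of fun i j : Fin n => (M *ᵥ A i j) k).PosSemidef :=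
  tenPSD_iff_transform_slices_posSemidef_general n₃ n M hM A hA

end
end

section
/- Fix n₃ ≥ 1 and an orthogonal matrix M ∈ ℝ^{n₃×n₃} (MᵀM = I). Let A be a ⋆_M-symmetric tensor of size n × n × n₃. Then A is ⋆_M-positive semidefinite if and only if for every nonempty subset J ⊆ {1,…,n} the ⋆_M-principal minor det_M(A_{J,J}) = Σ_{σ ∈ Sym(J)} sgn(σ) · A_{j₁,σ(j₁)} ⋆_M A_{j₂,σ(j₂)} ⋆_M ⋯ ⋆_M A_{j_ℓ,σ(j_ℓ)} (where J = {j₁ < j₂ < ⋯ < j_ℓ}) is a square in ℝ_M, i.e. equals x ⋆_M x for some x ∈ ℝ^{n₃}. -/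
open Matrix BigOperators Kronecker

noncomputable section

/-- The `⋆_M`-principal minor of `A` indexed by a subset `J`:
`Σ_{σ ∈ Sym(J)} sgn(σ) · ⋆_M-product of the tubes A_{j, σ(j)} for j ∈ J`
(the iterated `⋆_M`-product is taken with the identity tube `e_M` as base case). -/
def tenMinor {n₃ n : ℕ} (M : Matrix (Fin n₃) (Fin n₃) ℝ)
    (A : Fin n → Fin n → (Fin n₃ → ℝ)) (J : Finset (Fin n)) : Fin n₃ → ℝ :=
  ∑ σ : Equiv.Perm {x // x ∈ J},
    (Equiv.Perm.sign σ : ℤ) •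
      (J.attach.toList.map (fun j => A j.1 (σ j).1)).foldr (tubMul M) (tubOne M)

/-!
For orthogonal `M`, the transform `a ↦ M a` turns `⋆_M` into the entrywise product and preserves
the inner product, so `A` splits into the `n₃` real symmetric frontal slices `Âₖ` of `A ×₃ M`:
`A` is `⋆_M`-PSD iff every `Âₖ` is PSD, and the `k`-th entry of the transform of `det_M(A_{J,J})`
is the principal minor `det (Âₖ)_{J,J}`. A tube is a `⋆_M`-square iff its transform is entrywise
nonnegative, so everything reduces to the real criterion: a symmetric matrix `B` is PSD iff all its
principal minors are nonnegative. For the nontrivial direction, `det (1 + s • B)` is a polynomial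
in `s` whose coefficients are sums of principal minors, hence positive for `s ≥ 0`, whereas a
negative eigenvalue `λ` of `B` makes it vanish at `s = -λ⁻¹`.
-/

namespace Matrix

open Polynomial

variable {m : Type*} [Fintype m] [DecidableEq m]

lemma det_one_add_smul_pos_of_principal_minors_nonneg {B : Matrix m m ℝ}
    (h : ∀ S : Finset m, S.Nonempty → 0 ≤ (B.submatrix (Subtype.val : S → m) Subtype.val).det)
    {s : ℝ} (hs : 0 ≤ s) : 0 < (1 + s • B).det := by
  set p : ℝ[X] := det (1 + (X : ℝ[X]) • B.map C)
  have hcoeff : ∀ k, 0 ≤ p.coeff k := by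
    intro k
    rw [coeff_det_one_add_X_smul_eq_sum_minors]
    refine Finset.sum_nonneg fun S _ => ?_
    rcases S.eq_empty_or_nonempty with rfl | hne
    · simp
    · exact h S hne
  have hcoeff_zero : p.coeff 0 = 1 := by
    simp [p, coeff_det_one_add_X_smul_eq_sum_minors]
  have heval : (1 + s • B).det = p.eval s := by
    rw [← coe_evalRingHom, RingHom.map_det]
    congr 1
    ext i j
    simp only [RingHom.mapMatrix_apply, map_apply, add_apply, one_apply, smul_apply,
      coe_evalRingHom]
    split_ifs <;> simp only [eval_one, eval_zero, eval_add, eval_mul, eval_X, eval_C, smul_eq_mul]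
  rw [heval, eval_eq_sum_range]
  calc 0 < p.coeff 0 * s ^ 0 := by simp [hcoeff_zero]
    _ ≤ _ := Finset.single_le_sum (fun k _ => mul_nonneg (hcoeff k) (pow_nonneg hs k)) (by simp)

lemma IsHermitian.posSemidef_of_principal_minors_nonneg {B : Matrix m m ℝ} (hB : B.IsHermitian)
    (h : ∀ S : Finset m, S.Nonempty → 0 ≤ (B.submatrix (Subtype.val : S → m) Subtype.val).det) :
    B.PosSemidef := by
  refine hB.posSemidef_iff_eigenvalues_nonneg.mpr fun i => ?_
  by_contra! hneg
  have hsing : (1 + (-(hB.eigenvalues i)⁻¹) • B).det = 0 := by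
    rw [← exists_mulVec_eq_zero_iff]
    refine ⟨hB.eigenvectorBasis i,
      (WithLp.ofLp_eq_zero (p := 2)).not.mpr (hB.eigenvectorBasis.orthonormal.ne_zero i), ?_⟩
    rw [add_mulVec, one_mulVec, smul_mulVec, hB.mulVec_eigenvectorBasis, smul_smul, neg_mul,
      inv_mul_cancel₀ hneg.ne, neg_one_smul, add_neg_cancel]
  exact (det_one_add_smul_pos_of_principal_minors_nonneg h
    (neg_nonneg.mpr (inv_nonpos.mpr hneg.le))).ne' hsing

theorem IsHermitian.posSemidef_iff_principal_minors_nonneg {B : Matrix m m ℝ}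
    (hB : B.IsHermitian) : B.PosSemidef ↔
      ∀ S : Finset m, S.Nonempty → 0 ≤ (B.submatrix (Subtype.val : S → m) Subtype.val).det :=
  ⟨fun h _ _ => (h.submatrix Subtype.val).det_nonneg, hB.posSemidef_of_principal_minors_nonneg⟩

section Inverse

variable {n R : Type*} [Fintype n] [DecidableEq n] [CommRing R] {A : Matrix n n R}

lemma mulVec_nonsing_inv_mulVec (hA : IsUnit A.det) (v : n → R) : A *ᵥ (A⁻¹ *ᵥ v) = v := by
  rw [mulVec_mulVec, mul_nonsing_inv _ hA, one_mulVec]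

lemma nonsing_inv_mulVec_mulVec (hA : IsUnit A.det) (v : n → R) : A⁻¹ *ᵥ (A *ᵥ v) = v := by
  rw [mulVec_mulVec, nonsing_inv_mul _ hA, one_mulVec]

lemma dotProduct_mulVec_mulVec_of_transpose_mul_self (hA : Aᵀ * A = 1) (u v : n → R) :
    (A *ᵥ u) ⬝ᵥ (A *ᵥ v) = u ⬝ᵥ v := by
  rw [dotProduct_mulVec, ← mulVec_transpose, mulVec_mulVec, hA, one_mulVec]

end Inverse

end Matrix

section Tube

variable {n₃ : ℕ}

lemma mulVec_tubMul {R : Type} [CommRing R] {M : Matrix (Fin n₃) (Fin n₃) R}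
    (hM : IsUnit M.det) (a b : Fin n₃ → R) :
    M *ᵥ tubMul M a b = (M *ᵥ a) * (M *ᵥ b) :=
  mulVec_nonsing_inv_mulVec hM _

variable {M : Matrix (Fin n₃) (Fin n₃) ℝ}

lemma mulVec_tubOne (hM : IsUnit M.det) : M *ᵥ tubOne M = 1 :=
  mulVec_nonsing_inv_mulVec hM _

lemma mulVec_foldr_tubMul (hM : IsUnit M.det) (l : List (Fin n₃ → ℝ)) :
    M *ᵥ l.foldr (tubMul M) (tubOne M) = (l.map (M *ᵥ ·)).prod := by
  induction l with
  | nil => exact mulVec_tubOne hM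
  | cons a l ih => rw [List.foldr_cons, mulVec_tubMul hM, ih, List.map_cons, List.prod_cons]

lemma exists_tubMul_self_eq_iff (hM : IsUnit M.det) (a : Fin n₃ → ℝ) :
    (∃ x, tubMul M x x = a) ↔ 0 ≤ M *ᵥ a := by
  constructor
  · rintro ⟨x, rfl⟩ k
    rw [mulVec_tubMul hM]
    exact mul_self_nonneg _
  · intro ha
    refine ⟨M⁻¹ *ᵥ fun k => √((M *ᵥ a) k), ?_⟩
    have hsqrt : ((fun k => √((M *ᵥ a) k)) * fun k => √((M *ᵥ a) k)) = M *ᵥ a :=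
      funext fun k => Real.mul_self_sqrt (ha k)
    rw [tubMul, mulVec_nonsing_inv_mulVec hM, hsqrt, nonsing_inv_mulVec_mulVec hM]

end Tube

section TensorSlice

variable {n₃ : ℕ} {M : Matrix (Fin n₃) (Fin n₃) ℝ} {ι κ μ : Type}

/-- The `k`-th frontal slice `Âₖ` of `A ×₃ M`. -/
def tenSlice (M : Matrix (Fin n₃) (Fin n₃) ℝ) (A : ι → κ → (Fin n₃ → ℝ)) (k : Fin n₃) :
    Matrix ι κ ℝ :=
  of fun i j => (M *ᵥ A i j) k

lemma mulVec_tenMinor_apply (hM : IsUnit M.det) {n : ℕ} (A : Fin n → Fin n → (Fin n₃ → ℝ))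
    (J : Finset (Fin n)) (k : Fin n₃) :
    (M *ᵥ tenMinor M A J) k =
      ((tenSlice M A k).submatrix (Subtype.val : J → Fin n) Subtype.val).det := by
  rw [← det_transpose, det_apply, tenMinor, mulVec_sum, Finset.sum_apply]
  refine Finset.sum_congr rfl fun σ _ => ?_
  rw [mulVec_smul, Pi.smul_apply, mulVec_foldr_tubMul hM, List.map_map, Finset.prod_map_toList,
    Finset.prod_apply, ← Finset.univ_eq_attach]
  rfl

lemma tenSlice_tenMul [Fintype κ] (hM : IsUnit M.det) (A : ι → κ → (Fin n₃ → ℝ))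
    (B : κ → μ → (Fin n₃ → ℝ)) (k : Fin n₃) :
    tenSlice M (tenMul M A B) k = tenSlice M A k * tenSlice M B k := by
  ext i j
  simp only [tenSlice, tenMul, of_apply, mulVec_sum, Finset.sum_apply, mulVec_tubMul hM, mul_apply]
  rfl

lemma tenInner_eq_sum_tenSlice [Fintype ι] [Fintype μ] (hM : Mᵀ * M = 1)
    (X Y : ι → μ → (Fin n₃ → ℝ)) :
    tenInner X Y = ∑ k, ∑ i, ∑ j, tenSlice M X k i j * tenSlice M Y k i j := by
  calc tenInner X Y = ∑ i, ∑ j, (M *ᵥ X i j) ⬝ᵥ (M *ᵥ Y i j) := by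
        simp only [dotProduct_mulVec_mulVec_of_transpose_mul_self hM]; rfl
    _ = _ := by
        simp only [dotProduct, tenSlice, of_apply]
        exact Finset.sum_comm_cycle

lemma isHermitian_tenSlice {A : ι → ι → (Fin n₃ → ℝ)} (hA : tenTrans A = A) (k : Fin n₃) :
    (tenSlice M A k).IsHermitian := by
  ext i j
  exact congrArg (fun a => (M *ᵥ a) k) (congrFun₂ hA i j)

variable [Fintype ι]

lemma tenInner_tenMul_self_eq_sum (hM : Mᵀ * M = 1) (A : ι → ι → (Fin n₃ → ℝ))
    (X : ι → Fin 1 → (Fin n₃ → ℝ)) :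
    tenInner X (tenMul M A X) =
      ∑ k, (fun i => tenSlice M X k i 0) ⬝ᵥ (tenSlice M A k *ᵥ fun i => tenSlice M X k i 0) := by
  simp only [tenInner_eq_sum_tenSlice hM, tenSlice_tenMul (isUnit_det_of_left_inverse hM),
    Fin.sum_univ_one]
  rfl

theorem tenPSD_iff_forall_posSemidef_tenSlice (hM : Mᵀ * M = 1) {A : ι → ι → (Fin n₃ → ℝ)}
    (hA : tenTrans A = A) : tenPSD M A ↔ ∀ k, (tenSlice M A k).PosSemidef := by
  simp only [tenPSD, hA, true_and, posSemidef_iff_dotProduct_mulVec, isHermitian_tenSlice hA,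
    star_trivial, tenInner_tenMul_self_eq_sum hM]
  refine ⟨fun h k y => ?_, fun h X => Finset.sum_nonneg fun k _ => h k _⟩
  let Y : Fin n₃ → ι → ℝ := Pi.single k y
  let X : ι → Fin 1 → (Fin n₃ → ℝ) := fun i _ => M⁻¹ *ᵥ fun k' => Y k' i
  have hX : ∀ k', (fun i => tenSlice M X k' i 0) = Y k' := fun k' =>
    funext fun i => congrFun (mulVec_nonsing_inv_mulVec (isUnit_det_of_left_inverse hM) _) k'
  have hsum := h X
  simp only [hX] at hsum
  rw [Fintype.sum_eq_single k fun k' hk' => by simp [Y, Pi.single_eq_of_ne hk']] at hsum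
  simpa [Y] using hsum

end TensorSlice

theorem tenPSD_iff_principal_minors_squares_general (n₃ n : ℕ)
    (M : Matrix (Fin n₃) (Fin n₃) ℝ) (hM : Mᵀ * M = 1)
    (A : Fin n → Fin n → (Fin n₃ → ℝ)) (hA : tenTrans A = A) :
    tenPSD M A ↔
      ∀ J : Finset (Fin n), J.Nonempty →
        ∃ x : Fin n₃ → ℝ, tubMul M x x = tenMinor M A J := by
  have hM' : IsUnit M.det := isUnit_det_of_left_inverse hM
  simp only [tenPSD_iff_forall_posSemidef_tenSlice hM hA,
    (isHermitian_tenSlice hA _).posSemidef_iff_principal_minors_nonneg,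
    exists_tubMul_self_eq_iff hM', Pi.le_def, Pi.zero_apply, mulVec_tenMinor_apply hM']
  exact ⟨fun h J hJ k => h k J hJ, fun h k J hJ => h J hJ k⟩

/-- A `⋆_M`-symmetric tensor `A` is `⋆_M`-PSD iff every `⋆_M`-principal
minor `det_M(A_{J,J})`, for nonempty `J ⊆ {1,…,n}`, is a square in `ℝ_M`. -/
theorem tenPSD_iff_principal_minors_squares (n₃ n : ℕ) (hn₃ : 1 ≤ n₃)
    (M : Matrix (Fin n₃) (Fin n₃) ℝ) (hM : Mᵀ * M = 1)
    (A : Fin n → Fin n → (Fin n₃ → ℝ)) (hA : tenTrans A = A) :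
    tenPSD M A ↔
      ∀ J : Finset (Fin n), J.Nonempty →
        ∃ x : Fin n₃ → ℝ, tubMul M x x = tenMinor M A J :=
  tenPSD_iff_principal_minors_squares_general n₃ n M hM A hA

end
end

section
/- Fix n₃ ≥ 1 and an orthogonal matrix M ∈ ℝ^{n₃×n₃} (MᵀM = I). Let B and X be ⋆_M-symmetric tensors of size n × n × n₃, and let B̂ = (Iₙ ⊗ Mᵀ) · mat_M(B) · (Iₙ ⊗ M) and X̂ = (Iₙ ⊗ Mᵀ) · mat_M(X) · (Iₙ ⊗ M) be their matrix representatives. Then ⟨B, X⟩ = trace(B̂ · X̂). -/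
/-!
Conjugation by `Iₙ ⊗ Mᵀ` and `Iₙ ⊗ M`, which are mutually inverse, does not change the trace
of a product, so `trace(B̂ X̂) = trace(mat_M(B) mat_M(X))`. Since all blocks are diagonal, this
trace is `∑ᵢⱼ ⟨M Bᵢⱼ, M Xⱼᵢ⟩`; the orthogonality of `M` removes `M` and the symmetry of `X`
turns `Xⱼᵢ` into `Xᵢⱼ`.
-/

open Matrix BigOperators Kronecker

noncomputable section

theorem Matrix.trace_conj_mul_conj {m k R : Type*} [Fintype m] [Fintype k] [DecidableEq k]
    [CommSemiring R] {P : Matrix m k R} {Q : Matrix k m R} (hQP : Q * P = 1) (A B : Matrix k k R) :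
    trace (P * A * Q * (P * B * Q)) = trace (A * B) := by
  calc trace (P * A * Q * (P * B * Q)) = trace (P * (A * (Q * P) * B) * Q) := by
        simp only [Matrix.mul_assoc]
    _ = trace (A * B) := by rw [hQP, Matrix.mul_one, trace_mul_cycle, hQP, Matrix.one_mul]

theorem Matrix.dotProduct_mulVec_mulVec_of_transpose_mul_self_s15 {n R : Type*} [Fintype n]
    [DecidableEq n] [CommSemiring R] {M : Matrix n n R} (hM : Mᵀ * M = 1) (a b : n → R) :
    (M *ᵥ a) ⬝ᵥ (M *ᵥ b) = a ⬝ᵥ b := by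
  rw [dotProduct_mulVec, ← mulVec_transpose, mulVec_mulVec, hM, one_mulVec]

theorem trace_tenMat_mul_tenMat {n₃ : ℕ} {ι κ : Type} [Fintype ι] [Fintype κ]
    (M : Matrix (Fin n₃) (Fin n₃) ℝ) (A : ι → κ → Fin n₃ → ℝ) (B : κ → ι → Fin n₃ → ℝ) :
    trace (tenMat M A * tenMat M B) = ∑ i, ∑ j, (M *ᵥ A i j) ⬝ᵥ (M *ᵥ B j i) := by
  simp only [trace, diag, mul_apply, tenMat, of_apply, Fintype.sum_prod_type, ite_mul,
    zero_mul, mul_ite, mul_zero, Finset.sum_ite_eq', Finset.mem_univ, if_true,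
    dotProduct]
  exact Finset.sum_congr rfl fun i _ => Finset.sum_comm

theorem tenInner_eq_trace_matrix_representatives_general (n₃ n : ℕ)
    (M : Matrix (Fin n₃) (Fin n₃) ℝ) (hM : Mᵀ * M = 1)
    (B X : Fin n → Fin n → (Fin n₃ → ℝ)) (hX : tenTrans X = X) :
    tenInner B X =
      Matrix.trace
        ((((1 : Matrix (Fin n) (Fin n) ℝ) ⊗ₖ Mᵀ) * tenMat M B *
            ((1 : Matrix (Fin n) (Fin n) ℝ) ⊗ₖ M)) *
          (((1 : Matrix (Fin n) (Fin n) ℝ) ⊗ₖ Mᵀ) * tenMat M X *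
            ((1 : Matrix (Fin n) (Fin n) ℝ) ⊗ₖ M))) := by
  have hinv : ((1 : Matrix (Fin n) (Fin n) ℝ) ⊗ₖ M) * (1 ⊗ₖ Mᵀ) = 1 := by
    rw [← mul_kronecker_mul, one_mul, mul_eq_one_comm.mp hM, one_kronecker_one]
  rw [trace_conj_mul_conj hinv, trace_tenMat_mul_tenMat]
  refine Finset.sum_congr rfl fun i _ => Finset.sum_congr rfl fun j _ => ?_
  rw [dotProduct_mulVec_mulVec_of_transpose_mul_self_s15 hM, ← congrFun (congrFun hX i) j]
  rfl

/-- For `⋆_M`-symmetric tensors `B, X` with matrix representatives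
`B̂ = (Iₙ ⊗ Mᵀ) mat_M(B) (Iₙ ⊗ M)` and `X̂ = (Iₙ ⊗ Mᵀ) mat_M(X) (Iₙ ⊗ M)`,
one has `⟨B, X⟩ = trace(B̂ X̂)`. -/
theorem tenInner_eq_trace_matrix_representatives (n₃ n : ℕ) (hn₃ : 1 ≤ n₃)
    (M : Matrix (Fin n₃) (Fin n₃) ℝ) (hM : Mᵀ * M = 1)
    (B X : Fin n → Fin n → (Fin n₃ → ℝ)) (hB : tenTrans B = B) (hX : tenTrans X = X) :
    tenInner B X =
      Matrix.trace
        ((((1 : Matrix (Fin n) (Fin n) ℝ) ⊗ₖ Mᵀ) * tenMat M B *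
            ((1 : Matrix (Fin n) (Fin n) ℝ) ⊗ₖ M)) *
          (((1 : Matrix (Fin n) (Fin n) ℝ) ⊗ₖ Mᵀ) * tenMat M X *
            ((1 : Matrix (Fin n) (Fin n) ℝ) ⊗ₖ M))) :=
  tenInner_eq_trace_matrix_representatives_general n₃ n M hM B X hX

end
end

section
/- Fix n₃ ≥ 1 and an invertible matrix M ∈ ℝ^{n₃×n₃}. For every tensor A of size n₁ × n₂ × n₃ over ℝ there exist tensors U of size n₁ × n₁ × n₃, V of size n₂ × n₂ × n₃, and S of size n₁ × n₂ × n₃ such that U and V are ⋆_M-orthogonal (Uᵀ ⋆_M U = U ⋆_M Uᵀ = ℐ_M and Vᵀ ⋆_M V = V ⋆_M Vᵀ = ℐ_M), S is f-diagonal (S_{i,j} = 0 whenever i ≠ j), and A = U ⋆_M S ⋆_M Vᵀ. -/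
open Matrix BigOperators Kronecker

noncomputable section

/-!
Under `v ↦ M *ᵥ v` the `⋆_M`-product becomes the facewise matrix product in the transform
domain: the `k`-th frontal slice of `(A ⋆_M B)^` is `Â_k * B̂_k`, and transposes and `ℐ_M` go to
transposes and the identity. So it suffices to take a real SVD `Â_k = U_k S_k V_kᵀ` of every
slice and transform back.

For the matrix SVD, diagonalise `AᵀA = V D Vᵀ`; the columns of `A V` are then pairwise
orthogonal. When `n₂ ≤ n₁`, normalising the nonzero ones and extending them to an orthonormal
basis, with column `j` placed at index `j`, gives an orthogonal `U` with `A V = U S`. The case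
`n₁ < n₂` follows by transposition.
-/

theorem exists_orthonormalBasis_of_pairwise_inner_eq_zero {𝕜 E : Type*} [RCLike 𝕜]
    [NormedAddCommGroup E] [InnerProductSpace 𝕜 E] [FiniteDimensional 𝕜 E]
    {ι κ : Type*} [Fintype ι] (hcard : Module.finrank 𝕜 E = Fintype.card ι)
    (v : κ → E) (hv : Pairwise fun j k => inner 𝕜 (v j) (v k) = 0) (e : κ ↪ ι) :
    ∃ b : OrthonormalBasis ι 𝕜 E, ∀ j, v j = (‖v j‖ : 𝕜) • b (e j) := by
  classical
  set w : ι → E := Function.extend e (fun j => (‖v j‖⁻¹ : 𝕜) • v j) 0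
  have hw : ∀ j, w (e j) = (‖v j‖⁻¹ : 𝕜) • v j := fun j => e.injective.extend_apply _ _ j
  have hs : Orthonormal 𝕜 ((e '' {j | v j ≠ 0}).domRestrict w) := by
    rw [orthonormal_iff_ite]
    rintro ⟨_, j, hj, rfl⟩ ⟨_, k, -, rfl⟩
    simp only [Set.domRestrict_apply, hw, inner_smul_left, inner_smul_right]
    by_cases hjk : j = k
    · subst hjk
      have hvj : (‖v j‖ : 𝕜) ≠ 0 := by simpa using hj
      rw [if_pos rfl, inner_self_eq_norm_sq_to_K, map_inv₀, RCLike.conj_ofReal]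
      field_simp
    · rw [if_neg fun h => hjk (e.injective (congrArg Subtype.val h)), hv hjk, mul_zero, mul_zero]
  obtain ⟨b, hb⟩ := hs.exists_orthonormalBasis_extension_of_card_eq hcard
  refine ⟨b, fun j => ?_⟩
  by_cases hj : v j = 0
  · simp [hj]
  · have hvj : (‖v j‖ : 𝕜) ≠ 0 := by simpa using hj
    rw [hb (e j) ⟨j, hj, rfl⟩, hw, smul_smul, mul_inv_cancel₀ hvj, one_smul]

namespace Matrix

theorem exists_mem_orthogonalGroup_mul_of_isDiag_transpose_mul_self
    {ι κ : Type*} [Fintype ι] [DecidableEq ι] [Fintype κ]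
    (B : Matrix ι κ ℝ) (hB : (Bᵀ * B).IsDiag) (e : κ ↪ ι) :
    ∃ U ∈ orthogonalGroup ι ℝ, ∃ S : Matrix ι κ ℝ,
      (∀ i j, i ≠ e j → S i j = 0) ∧ B = U * S := by
  set v : κ → EuclideanSpace ℝ ι := fun j => WithLp.toLp 2 fun i => B i j
  have hv : Pairwise fun j k => inner ℝ (v j) (v k) = 0 := fun j k hjk => by
    simpa [v, EuclideanSpace.inner_toLp_toLp, mul_apply, dotProduct, mul_comm]
      using hB hjk.symm
  obtain ⟨b, hb⟩ := exists_orthonormalBasis_of_pairwise_inner_eq_zero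
    finrank_euclideanSpace v hv e
  refine ⟨(EuclideanSpace.basisFun ι ℝ).toBasis.toMatrix b,
    (EuclideanSpace.basisFun ι ℝ).toMatrix_orthonormalBasis_mem_orthogonal b,
    of fun i j => if i = e j then ‖v j‖ else 0, fun i j hij => if_neg hij, ?_⟩
  ext i j
  simp only [mul_apply, of_apply, mul_ite, mul_zero, Finset.sum_ite_eq', Finset.mem_univ,
    if_true, Module.Basis.toMatrix_apply, OrthonormalBasis.coe_toBasis_repr_apply,
    EuclideanSpace.basisFun_repr]
  conv_lhs => rw [show B i j = v j i from rfl, hb j]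
  simp [mul_comm]

theorem exists_svd_of_le {m n : ℕ} (h : n ≤ m) (A : Matrix (Fin m) (Fin n) ℝ) :
    ∃ U ∈ orthogonalGroup (Fin m) ℝ, ∃ S : Matrix (Fin m) (Fin n) ℝ,
      ∃ V ∈ orthogonalGroup (Fin n) ℝ,
        (∀ (i : Fin m) (j : Fin n), (i : ℕ) ≠ j → S i j = 0) ∧ A = U * S * Vᵀ := by
  have hA : (Aᵀ * A).IsHermitian := by simpa using isHermitian_conjTranspose_mul_self A
  set V : Matrix (Fin n) (Fin n) ℝ := (hA.eigenvectorUnitary : Matrix (Fin n) (Fin n) ℝ)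
  have hV : V ∈ orthogonalGroup (Fin n) ℝ := hA.eigenvectorUnitary.2
  have hdiag : ((A * V)ᵀ * (A * V)).IsDiag := by
    have h := hA.conjStarAlgAut_star_eigenvectorUnitary
    simp only [Unitary.conjStarAlgAut_star_apply, star_eq_conjTranspose,
      conjTranspose_eq_transpose_of_trivial] at h
    rw [transpose_mul, Matrix.mul_assoc, ← Matrix.mul_assoc Aᵀ, ← Matrix.mul_assoc]
    exact h ▸ isDiag_diagonal _
  obtain ⟨U, hU, S, hS, hAV⟩ := exists_mem_orthogonalGroup_mul_of_isDiag_transpose_mul_self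
    (A * V) hdiag (Fin.castLEEmb h)
  refine ⟨U, hU, S, V, hV, fun i j hij => hS i j fun h => hij (by simp [h]), ?_⟩
  rw [← hAV, Matrix.mul_assoc, (mem_orthogonalGroup_iff (Fin n) ℝ).mp hV, Matrix.mul_one]

theorem exists_svd {m n : ℕ} (A : Matrix (Fin m) (Fin n) ℝ) :
    ∃ U ∈ orthogonalGroup (Fin m) ℝ, ∃ S : Matrix (Fin m) (Fin n) ℝ,
      ∃ V ∈ orthogonalGroup (Fin n) ℝ,
        (∀ (i : Fin m) (j : Fin n), (i : ℕ) ≠ j → S i j = 0) ∧ A = U * S * Vᵀ := by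
  rcases le_total n m with h | h
  · exact exists_svd_of_le h A
  · obtain ⟨V, hV, S, U, hU, hS, hA⟩ := exists_svd_of_le h Aᵀ
    refine ⟨U, hU, Sᵀ, V, hV, fun i j hij => hS j i (Ne.symm hij), ?_⟩
    rw [← transpose_transpose A, hA]
    simp only [transpose_mul, transpose_transpose, Matrix.mul_assoc]

end Matrix

section TransformDomain

variable {n₃ : ℕ} {R : Type} [CommRing R] {M : Matrix (Fin n₃) (Fin n₃) R} {ι κ : Type}

/-- `hatSlice M X k` is the `k`-th frontal slice of `X̂ = X ×₃ M`. -/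
def hatSlice (M : Matrix (Fin n₃) (Fin n₃) R) (X : ι → κ → (Fin n₃ → R)) (k : Fin n₃) :
    Matrix ι κ R :=
  of fun i j => (M *ᵥ X i j) k

def ofHatSlices (M : Matrix (Fin n₃) (Fin n₃) R) (F : Fin n₃ → Matrix ι κ R) :
    ι → κ → (Fin n₃ → R) :=
  fun i j => M⁻¹ *ᵥ fun k => F k i j

theorem hatSlice_ofHatSlices (hM : IsUnit M.det) (F : Fin n₃ → Matrix ι κ R) :
    hatSlice M (ofHatSlices M F) = F := by
  ext k i j
  simp [hatSlice, ofHatSlices, mulVec_mulVec, mul_nonsing_inv _ hM]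

theorem hatSlice_injective (hM : IsUnit M.det) :
    Function.Injective (hatSlice (ι := ι) (κ := κ) M) := by
  intro X Y h
  ext i j : 2
  have hXY : M *ᵥ X i j = M *ᵥ Y i j := funext fun k => congrFun₃ h k i j
  simpa [mulVec_mulVec, nonsing_inv_mul _ hM] using congrArg (M⁻¹ *ᵥ ·) hXY

theorem hatSlice_tenMul (hM : IsUnit M.det) {μ : Type} [Fintype κ]
    (X : ι → κ → (Fin n₃ → R)) (Y : κ → μ → (Fin n₃ → R)) (k : Fin n₃) :
    hatSlice M (tenMul M X Y) k = hatSlice M X k * hatSlice M Y k := by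
  ext i j
  simp [hatSlice, tenMul, tubMul, mul_apply, mulVec_sum, mulVec_mulVec, mul_nonsing_inv _ hM]

theorem hatSlice_tenTrans (X : ι → κ → (Fin n₃ → R)) (k : Fin n₃) :
    hatSlice M (tenTrans X) k = (hatSlice M X k)ᵀ :=
  rfl

end TransformDomain

theorem hatSlice_tenId {n₃ : ℕ} {M : Matrix (Fin n₃) (Fin n₃) ℝ} (hM : IsUnit M.det)
    {ι : Type} [DecidableEq ι] (k : Fin n₃) :
    hatSlice M (tenId (ι := ι) M) k = 1 := by
  ext i j
  by_cases h : i = j <;>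
    simp [hatSlice, tenId, tubOne, one_apply, h, mulVec_mulVec, mul_nonsing_inv _ hM]

theorem tenMul_tenTrans_ofHatSlices_eq_tenId {n₃ : ℕ} {M : Matrix (Fin n₃) (Fin n₃) ℝ}
    (hM : IsUnit M.det) {ι : Type} [Fintype ι] [DecidableEq ι] {Q : Fin n₃ → Matrix ι ι ℝ}
    (hQ : ∀ k, Q k ∈ orthogonalGroup ι ℝ) :
    tenMul M (tenTrans (ofHatSlices M Q)) (ofHatSlices M Q) = tenId M ∧
      tenMul M (ofHatSlices M Q) (tenTrans (ofHatSlices M Q)) = tenId M := by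
  constructor <;> refine hatSlice_injective hM (funext fun k => ?_) <;>
    rw [hatSlice_tenMul hM, hatSlice_tenTrans, hatSlice_ofHatSlices hM, hatSlice_tenId hM]
  exacts [(mem_orthogonalGroup_iff' ι ℝ).mp (hQ k), (mem_orthogonalGroup_iff ι ℝ).mp (hQ k)]

theorem starM_svd_exists_general (n₁ n₂ n₃ : ℕ)
    (M : Matrix (Fin n₃) (Fin n₃) ℝ) (hM : IsUnit M.det)
    (A : Fin n₁ → Fin n₂ → (Fin n₃ → ℝ)) :
    ∃ (U : Fin n₁ → Fin n₁ → (Fin n₃ → ℝ))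
      (S : Fin n₁ → Fin n₂ → (Fin n₃ → ℝ))
      (V : Fin n₂ → Fin n₂ → (Fin n₃ → ℝ)),
      tenMul M (tenTrans U) U = tenId M ∧ tenMul M U (tenTrans U) = tenId M ∧
      tenMul M (tenTrans V) V = tenId M ∧ tenMul M V (tenTrans V) = tenId M ∧
      (∀ (i : Fin n₁) (j : Fin n₂), (i : ℕ) ≠ (j : ℕ) → S i j = 0) ∧
      A = tenMul M U (tenMul M S (tenTrans V)) := by
  choose U hU S V hV hS hA using fun k => Matrix.exists_svd (hatSlice M A k)
  obtain ⟨hU₁, hU₂⟩ := tenMul_tenTrans_ofHatSlices_eq_tenId hM hU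
  obtain ⟨hV₁, hV₂⟩ := tenMul_tenTrans_ofHatSlices_eq_tenId hM hV
  refine ⟨ofHatSlices M U, ofHatSlices M S, ofHatSlices M V, hU₁, hU₂, hV₁, hV₂, ?_, ?_⟩
  · intro i j hij
    simp only [ofHatSlices, fun k => hS k i j hij]
    exact mulVec_zero _
  · refine hatSlice_injective hM (funext fun k => ?_)
    simp only [hatSlice_tenMul hM, hatSlice_tenTrans, hatSlice_ofHatSlices hM, hA k,
      Matrix.mul_assoc]

/-- Existence of the `⋆_M`-SVD: every `n₁ × n₂ × n₃` tensor `A` factors as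
`A = U ⋆_M S ⋆_M Vᵀ` with `U, V` `⋆_M`-orthogonal and `S` f-diagonal. -/
theorem starM_svd_exists (n₁ n₂ n₃ : ℕ) (hn₃ : 1 ≤ n₃)
    (M : Matrix (Fin n₃) (Fin n₃) ℝ) (hM : IsUnit M.det)
    (A : Fin n₁ → Fin n₂ → (Fin n₃ → ℝ)) :
    ∃ (U : Fin n₁ → Fin n₁ → (Fin n₃ → ℝ))
      (S : Fin n₁ → Fin n₂ → (Fin n₃ → ℝ))
      (V : Fin n₂ → Fin n₂ → (Fin n₃ → ℝ)),
      tenMul M (tenTrans U) U = tenId M ∧ tenMul M U (tenTrans U) = tenId M ∧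
      tenMul M (tenTrans V) V = tenId M ∧ tenMul M V (tenTrans V) = tenId M ∧
      (∀ (i : Fin n₁) (j : Fin n₂), (i : ℕ) ≠ (j : ℕ) → S i j = 0) ∧
      A = tenMul M U (tenMul M S (tenTrans V)) :=
  starM_svd_exists_general n₁ n₂ n₃ M hM A

end
end
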